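/- arXiv:2501.15859 — 3 statements merged into one kernel-verified Lean document; each statement's English description precedes it below -/
import Mathlib

section
/- The center of W_{p,q} equals F[ω], the F-subalgebra of W_{p,q} generated by the element ω = a·b⋆ + b·a⋆. -/
/-!
`ω` commutes with `a` because `a² = tr(p)·a - N(p)` and the coefficient of `b` in
`ω = tr(q)·a + tr(p)·b - ab - ba` is exactly `tr(p)`; symmetrically for `b`. Hence `F[ω]` is
central, and the quadratic relations show that `W_{p,q}` is spanned over `F[ω]` by `1, a, b, ab`.

For the converse, `W_{p,q}` maps to `2 × 2` matrices over `F[t]`: `a` to the companion matrix `A`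
of `p`, `b` to a matrix `B` with characteristic polynomial `q` depending on `t`. Then `ω` goes to
the scalar `λ(t)` of degree `2`, and `det (AB - BA) ≠ 0`. A matrix `α + βA + γB + δAB` commuting
with `A` and `B` has `β = γ = δ = 0`, since its commutators with `A` and `B` are
`(γ + δA)(BA - AB)` and `(AB - BA)(β + δB)`. As `λ` is transcendental over `F`, a central
element `f₀(ω) + f₁(ω)a + f₂(ω)b + f₃(ω)ab` has `f₁ = f₂ = f₃ = 0`.
-/

open Polynomial

noncomputable section

variable {F : Type*} [Field F]

/-- The defining relation of the free Hamilton algebra `W_{p,q}`: we identify `p(a)` and `q(b)`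
with `0`, where `a` and `b` are the two generators of the free algebra. -/
def hamRel (p q : F[X]) : FreeAlgebra F (Fin 2) → FreeAlgebra F (Fin 2) → Prop :=
  fun x y =>
    (x = Polynomial.aeval (FreeAlgebra.ι F (0 : Fin 2)) p ∧ y = 0) ∨
    (x = Polynomial.aeval (FreeAlgebra.ι F (1 : Fin 2)) q ∧ y = 0)

/-- The free Hamilton algebra `W_{p,q}`: the quotient of the free associative unital `F`-algebra
on two generators by the two-sided ideal generated by `p(a)` and `q(b)`. -/
abbrev HamAlg (p q : F[X]) : Type _ := RingQuot (hamRel p q)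

/-- The coset `a` of the first generator. -/
def genA (p q : F[X]) : HamAlg p q :=
  RingQuot.mkAlgHom F (hamRel p q) (FreeAlgebra.ι F 0)

/-- The coset `b` of the second generator. -/
def genB (p q : F[X]) : HamAlg p q :=
  RingQuot.mkAlgHom F (hamRel p q) (FreeAlgebra.ι F 1)

/-- `σ` is the adjunction of `W_{p,q}`: the unique `F`-linear antiautomorphism with
`a⋆ = tr(p)·1 − a` and `b⋆ = tr(q)·1 − b`, where `tr(p) = -(coeff of t in p)`.
It is involutive. -/
def IsAdjunction (p q : F[X]) (σ : HamAlg p q → HamAlg p q) : Prop :=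
  (∀ x y, σ (x + y) = σ x + σ y) ∧
  (∀ (c : F) (x : HamAlg p q), σ (c • x) = c • σ x) ∧
  (∀ x y, σ (x * y) = σ y * σ x) ∧
  σ 1 = 1 ∧
  (∀ x, σ (σ x) = x) ∧
  σ (genA p q) = algebraMap F (HamAlg p q) (-(p.coeff 1)) - genA p q ∧
  σ (genB p q) = algebraMap F (HamAlg p q) (-(q.coeff 1)) - genB p q

namespace Polynomial

theorem Monic.eq_X_sq_add_C_mul_X_add_C {R : Type*} [Semiring R] {p : R[X]} (hp : p.Monic)
    (hpd : p.natDegree = 2) : p = X ^ 2 + C (p.coeff 1) * X + C (p.coeff 0) := by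
  have h2 : p.coeff 2 = 1 := hpd ▸ hp.coeff_natDegree
  ext (_ | _ | _ | n)
  · simp
  · simp
  · simp [h2, coeff_X_pow]
  · rw [coeff_eq_zero_of_natDegree_lt (by omega)]
    simp [coeff_X_pow]

theorem eq_zero_of_aeval_eq_zero_of_natDegree_pos {R : Type*} [CommRing R]
    [NoZeroDivisors R] {f g : R[X]} (hg : 0 < g.natDegree) (h : aeval g f = 0) : f = 0 := by
  rw [← comp_eq_aeval, comp_eq_zero_iff] at h
  refine h.resolve_right fun ⟨_, hC⟩ => ?_
  rw [hC, natDegree_C] at hg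
  exact hg.false

end Polynomial

section SpanMul

variable {R A : Type*} [CommRing R] [Ring A] [Algebra R A]

theorem Submodule.mul_mem_span_of_commute {S : Subalgebra R A} {s : Set A} {x : A}
    (hx : ∀ c ∈ S, Commute x c) (hs : ∀ y ∈ s, x * y ∈ span S s) {m : A}
    (hm : m ∈ span S s) : x * m ∈ span S s := by
  induction hm using Submodule.span_induction with
  | mem y hy => exact hs y hy
  | zero => simp
  | add y z _ _ hy hz => simpa only [mul_add] using add_mem hy hz
  | smul c y _ hy =>
    rw [Subalgebra.smul_def, smul_eq_mul, ← mul_assoc, (hx c c.2).eq, mul_assoc]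
    exact (span S s).smul_mem c hy

theorem Submodule.mul_mem_of_mem_adjoin {S : Subalgebra R A} {M : Submodule S A} {s : Set A}
    (hs : ∀ x ∈ s, ∀ m ∈ M, x * m ∈ M) {z : A} (hz : z ∈ Algebra.adjoin R s) {m : A}
    (hm : m ∈ M) : z * m ∈ M := by
  induction hz using Algebra.adjoin_induction generalizing m with
  | mem x hx => exact hs x hx m hm
  | algebraMap r => simpa only [← Algebra.smul_def] using M.smul_of_tower_mem r hm
  | add x y _ _ hx hy => simpa only [add_mul] using add_mem (hx hm) (hy hm)
  | mul x y _ _ hx hy => simpa only [mul_assoc] using hx (hy hm)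

end SpanMul

namespace Matrix

variable {R n : Type*} [CommRing R] [IsDomain R] [Fintype n] [DecidableEq n]

theorem eq_zero_of_mul_eq_zero_of_det_ne_zero {M C : Matrix n n R} (h : M * C = 0)
    (hC : C.det ≠ 0) : M = 0 := by
  have : C.det • M = 0 :=
    calc C.det • M = M * (C * C.adjugate) := by rw [mul_adjugate, mul_smul_comm, mul_one]
      _ = 0 := by rw [← mul_assoc, h, zero_mul]
  exact (smul_eq_zero.1 this).resolve_left hC

theorem eq_zero_of_mul_eq_zero_of_det_ne_zero' {M C : Matrix n n R} (h : C * M = 0)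
    (hC : C.det ≠ 0) : M = 0 := by
  have : C.det • M = 0 :=
    calc C.det • M = C.adjugate * C * M := by rw [adjugate_mul, smul_mul_assoc, one_mul]
      _ = 0 := by rw [mul_assoc, h, mul_zero]
  exact (smul_eq_zero.1 this).resolve_left hC

theorem eq_zero_of_commute_of_det_commutator_ne_zero [Nonempty n] {A B : Matrix n n R}
    (hdet : (A * B - B * A).det ≠ 0) {α β γ δ : R}
    (hA : Commute (α • 1 + β • A + γ • B + δ • (A * B)) A)
    (hB : Commute (α • 1 + β • A + γ • B + δ • (A * B)) B) :
    β = 0 ∧ γ = 0 ∧ δ = 0 := by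
  have hC : A * B - B * A ≠ 0 := fun h => hdet (by rw [h, det_zero])
  have hAγδ : γ • 1 + δ • A = 0 := by
    refine eq_zero_of_mul_eq_zero_of_det_ne_zero ?_ hdet
    linear_combination (norm := skip) -hA.eq
    simp only [mul_add, add_mul, mul_sub, mul_smul_comm, smul_mul_assoc, mul_assoc,
      mul_one, one_mul]
    module
  have hBβδ : β • 1 + δ • B = 0 := by
    refine eq_zero_of_mul_eq_zero_of_det_ne_zero' ?_ hdet
    linear_combination (norm := skip) hB.eq
    simp only [mul_add, add_mul, sub_mul, mul_smul_comm, smul_mul_assoc, mul_assoc,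
      mul_one, one_mul]
    module
  have hδ : δ = 0 := by
    have : δ • (A * B - B * A) = 0 := by
      linear_combination (norm := skip) hAγδ * B - B * hAγδ
      simp only [add_mul, mul_add, mul_smul_comm, smul_mul_assoc, mul_one, one_mul, zero_mul,
        mul_zero]
      module
    exact (smul_eq_zero.1 this).resolve_right hC
  subst hδ
  simp only [zero_smul, add_zero, smul_eq_zero, one_ne_zero, or_false] at hAγδ hBβδ
  exact ⟨hBβδ, hAγδ, rfl⟩

end Matrix

section QuadraticPair

variable {R A : Type*} [CommRing R] [Ring A] [Algebra R A] {p q : R[X]} {a b : A}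

theorem mul_self_eq_of_aeval_eq_zero (hp : p.Monic) (hpd : p.natDegree = 2)
    (ha : aeval a p = 0) : a * a = (-p.coeff 1) • a - p.coeff 0 • 1 := by
  rw [hp.eq_X_sq_add_C_mul_X_add_C hpd] at ha
  simp only [map_add, map_mul, aeval_X, aeval_C, ← Algebra.smul_def, sq] at ha
  rw [Algebra.algebraMap_eq_smul_one] at ha
  linear_combination (norm := module) ha

/-- `a·b⋆ + b·a⋆` expanded using `a⋆ = tr(p) - a` and `b⋆ = tr(q) - b`, where
`tr(p) = -p.coeff 1`. -/
def hamOmega (p q : R[X]) (a b : A) : A :=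
  (-q.coeff 1) • a + (-p.coeff 1) • b - a * b - b * a

theorem commute_hamOmega_left (hp : p.Monic) (hpd : p.natDegree = 2) (ha : aeval a p = 0) :
    Commute a (hamOmega p q a b) := by
  have h := mul_self_eq_of_aeval_eq_zero hp hpd ha
  rw [Commute, SemiconjBy, hamOmega]
  linear_combination (norm := skip) b * h - h * b
  simp only [mul_add, add_mul, mul_sub, sub_mul, mul_smul_comm, smul_mul_assoc, mul_assoc,
    mul_one, one_mul]
  module

theorem commute_hamOmega_right (hq : q.Monic) (hqd : q.natDegree = 2) (hb : aeval b q = 0) :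
    Commute b (hamOmega p q a b) := by
  have h := mul_self_eq_of_aeval_eq_zero hq hqd hb
  rw [Commute, SemiconjBy, hamOmega]
  linear_combination (norm := skip) a * h - h * a
  simp only [mul_add, add_mul, mul_sub, sub_mul, mul_smul_comm, smul_mul_assoc, mul_assoc,
    mul_one, one_mul]
  module

theorem hamOmega_mem_center (hp : p.Monic) (hpd : p.natDegree = 2) (hq : q.Monic)
    (hqd : q.natDegree = 2) (ha : aeval a p = 0) (hb : aeval b q = 0)
    (hgen : Algebra.adjoin R {a, b} = ⊤) : hamOmega p q a b ∈ Subalgebra.center R A := by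
  refine Subalgebra.mem_center_iff.2 fun z => ?_
  have hz : z ∈ Algebra.adjoin R {a, b} := hgen ▸ Algebra.mem_top
  refine (Algebra.commute_of_mem_adjoin_of_forall_mem_commute hz ?_).eq.symm
  rintro _ (rfl | rfl)
  exacts [(commute_hamOmega_left hp hpd ha).symm, (commute_hamOmega_right hq hqd hb).symm]

def hamSpan (p q : R[X]) (a b : A) : Submodule (Algebra.adjoin R {hamOmega p q a b}) A :=
  Submodule.span _ {1, a, b, a * b}

theorem mul_mem_hamSpan_left (hp : p.Monic) (hpd : p.natDegree = 2) (ha : aeval a p = 0)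
    {m : A} (hm : m ∈ hamSpan p q a b) : a * m ∈ hamSpan p q a b := by
  set M := hamSpan p q a b
  have h1 : (1 : A) ∈ M := Submodule.subset_span (by simp)
  have ha' : a ∈ M := Submodule.subset_span (by simp)
  have hb' : b ∈ M := Submodule.subset_span (by simp)
  have hab : a * b ∈ M := Submodule.subset_span (by simp)
  have haa := mul_self_eq_of_aeval_eq_zero hp hpd ha
  refine Submodule.mul_mem_span_of_commute (fun c hc =>
    Algebra.commute_of_mem_adjoin_singleton_of_commute hc (commute_hamOmega_left hp hpd ha))
    ?_ hm
  simp only [Set.mem_insert_iff, Set.mem_singleton_iff, forall_eq_or_imp, forall_eq]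
  refine ⟨by rw [mul_one]; exact ha', ?_, hab, ?_⟩
  · rw [haa]
    exact sub_mem (M.smul_of_tower_mem _ ha') (M.smul_of_tower_mem _ h1)
  · rw [← mul_assoc, haa, sub_mul, smul_mul_assoc, smul_mul_assoc, one_mul]
    exact sub_mem (M.smul_of_tower_mem _ hab) (M.smul_of_tower_mem _ hb')

theorem mul_mem_hamSpan_right (hq : q.Monic) (hqd : q.natDegree = 2) (hb : aeval b q = 0)
    {m : A} (hm : m ∈ hamSpan p q a b) : b * m ∈ hamSpan p q a b := by
  set ω := hamOmega p q a b with hω_def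
  set M := hamSpan p q a b
  have h1 : (1 : A) ∈ M := Submodule.subset_span (by simp)
  have ha' : a ∈ M := Submodule.subset_span (by simp)
  have hb' : b ∈ M := Submodule.subset_span (by simp)
  have hab : a * b ∈ M := Submodule.subset_span (by simp)
  have hωM : ∀ m ∈ M, ω * m ∈ M := fun m hm =>
    M.smul_mem ⟨ω, Algebra.self_mem_adjoin_singleton R ω⟩ hm
  have hω : ω ∈ M := mul_one ω ▸ hωM 1 h1
  have hbb := mul_self_eq_of_aeval_eq_zero hq hqd hb
  have hba : b * a = (-q.coeff 1) • a + (-p.coeff 1) • b - ω - a * b := by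
    rw [hω_def, hamOmega]
    noncomm_ring
  have hbab : b * (a * b) = q.coeff 0 • a + (p.coeff 1 * q.coeff 1) • b - ω * b
      + (p.coeff 1 * q.coeff 0) • 1 := by
    linear_combination (norm := skip) hba * b - p.coeff 1 • hbb - a * hbb
    simp only [add_mul, mul_sub, sub_mul, mul_smul_comm, smul_mul_assoc, mul_assoc, mul_one]
    module
  refine Submodule.mul_mem_span_of_commute (fun c hc =>
    Algebra.commute_of_mem_adjoin_singleton_of_commute hc (commute_hamOmega_right hq hqd hb))
    ?_ hm
  simp only [Set.mem_insert_iff, Set.mem_singleton_iff, forall_eq_or_imp, forall_eq]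
  refine ⟨by rw [mul_one]; exact hb', ?_, ?_, ?_⟩
  · rw [hba]
    exact sub_mem (sub_mem (add_mem (M.smul_of_tower_mem _ ha') (M.smul_of_tower_mem _ hb'))
      hω) hab
  · rw [hbb]
    exact sub_mem (M.smul_of_tower_mem _ hb') (M.smul_of_tower_mem _ h1)
  · rw [hbab]
    exact add_mem (sub_mem (add_mem (M.smul_of_tower_mem _ ha') (M.smul_of_tower_mem _ hb'))
      (hωM b hb')) (M.smul_of_tower_mem _ h1)

theorem mem_hamSpan (hp : p.Monic) (hpd : p.natDegree = 2) (hq : q.Monic)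
    (hqd : q.natDegree = 2) (ha : aeval a p = 0) (hb : aeval b q = 0)
    (hgen : Algebra.adjoin R {a, b} = ⊤) (z : A) : z ∈ hamSpan p q a b := by
  have hgens : ∀ x ∈ ({a, b} : Set A), ∀ m ∈ hamSpan p q a b, x * m ∈ hamSpan p q a b := by
    rintro x (rfl | rfl) m hm
    exacts [mul_mem_hamSpan_left hp hpd ha hm, mul_mem_hamSpan_right hq hqd hb hm]
  simpa using Submodule.mul_mem_of_mem_adjoin hgens (hgen ▸ Algebra.mem_top : z ∈ _)
    (Submodule.subset_span (by simp) : (1 : A) ∈ hamSpan p q a b)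

theorem exists_eq_aeval_hamOmega (hp : p.Monic) (hpd : p.natDegree = 2) (hq : q.Monic)
    (hqd : q.natDegree = 2) (ha : aeval a p = 0) (hb : aeval b q = 0)
    (hgen : Algebra.adjoin R {a, b} = ⊤) (z : A) :
    ∃ f₀ f₁ f₂ f₃ : R[X], z = aeval (hamOmega p q a b) f₀ + aeval (hamOmega p q a b) f₁ * a
      + aeval (hamOmega p q a b) f₂ * b + aeval (hamOmega p q a b) f₃ * (a * b) := by
  have hS (c : Algebra.adjoin R {hamOmega p q a b}) :
      ∃ f : R[X], aeval (hamOmega p q a b) f = c := by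
    simpa [Algebra.adjoin_singleton_eq_range_aeval] using c.2
  have hz := mem_hamSpan hp hpd hq hqd ha hb hgen z
  obtain ⟨c₀, _, hz₁, rfl⟩ := Submodule.mem_span_insert.1 hz
  obtain ⟨c₁, _, hz₂, rfl⟩ := Submodule.mem_span_insert.1 hz₁
  obtain ⟨c₂, _, hz₃, rfl⟩ := Submodule.mem_span_insert.1 hz₂
  obtain ⟨c₃, rfl⟩ := Submodule.mem_span_singleton.1 hz₃
  obtain ⟨f₀, hf₀⟩ := hS c₀
  obtain ⟨f₁, hf₁⟩ := hS c₁
  obtain ⟨f₂, hf₂⟩ := hS c₂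
  obtain ⟨f₃, hf₃⟩ := hS c₃
  refine ⟨f₀, f₁, f₂, f₃, ?_⟩
  simp only [Subalgebra.smul_def, smul_eq_mul, hf₀, hf₁, hf₂, hf₃, mul_one, add_assoc]

end QuadraticPair

theorem AlgHom.map_hamOmega {R A B : Type*} [CommRing R] [Ring A] [Ring B] [Algebra R A]
    [Algebra R B] (φ : A →ₐ[R] B) (p q : R[X]) (a b : A) :
    φ (hamOmega p q a b) = hamOmega p q (φ a) (φ b) := by
  simp [hamOmega]

namespace HamAlg

variable {p q : F[X]}

theorem aeval_genA : aeval (genA p q) p = 0 := by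
  rw [genA, aeval_algHom_apply, RingQuot.mkAlgHom_rel F (s := hamRel p q) (Or.inl ⟨rfl, rfl⟩),
    map_zero]

theorem aeval_genB : aeval (genB p q) q = 0 := by
  rw [genB, aeval_algHom_apply, RingQuot.mkAlgHom_rel F (s := hamRel p q) (Or.inr ⟨rfl, rfl⟩),
    map_zero]

theorem adjoin_genA_genB : Algebra.adjoin F {genA p q, genB p q} = ⊤ := by
  have h : {genA p q, genB p q} =
      RingQuot.mkAlgHom F (hamRel p q) '' Set.range (FreeAlgebra.ι F) := by
    ext
    simp [genA, genB, Fin.exists_fin_two, eq_comm]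
  rw [h, ← AlgHom.map_adjoin, FreeAlgebra.adjoin_range_ι, Algebra.map_top, AlgHom.range_eq_top]
  exact RingQuot.mkAlgHom_surjective F (hamRel p q)

section Lift

variable {B : Type*} [Semiring B] [Algebra F B] (x y : B) (hx : aeval x p = 0)
  (hy : aeval y q = 0)

def lift : HamAlg p q →ₐ[F] B :=
  RingQuot.liftAlgHom F ⟨FreeAlgebra.lift F ![x, y], by
    rintro _ _ (⟨rfl, rfl⟩ | ⟨rfl, rfl⟩) <;> simpa [← aeval_algHom_apply]⟩

@[simp]
theorem lift_genA : lift x y hx hy (genA p q) = x := by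
  simp [lift, genA]

@[simp]
theorem lift_genB : lift x y hx hy (genB p q) = y := by
  simp [lift, genB]

end Lift

def repA (p : F[X]) : Matrix (Fin 2) (Fin 2) F[X] :=
  !![0, -C (p.coeff 0); 1, -C (p.coeff 1)]

/-- Trace `-q.coeff 1` and determinant `q.coeff 0`; the entries depend on `X` so that `ω` acts
by a non-constant scalar (`hamOmega_repA_repB`). -/
def repB (q : F[X]) : Matrix (Fin 2) (Fin 2) F[X] :=
  !![X, -(X ^ 2 + C (q.coeff 1) * X + C (q.coeff 0)); 1, -C (q.coeff 1) - X]

theorem aeval_repA (hp : p.Monic) (hpd : p.natDegree = 2) : aeval (repA p) p = 0 := by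
  rw [hp.eq_X_sq_add_C_mul_X_add_C hpd]
  ext i j : 1
  fin_cases i <;> fin_cases j <;>
    simp [repA, sq, Matrix.mul_apply, Matrix.algebraMap_matrix_apply, algebraMap_eq]
  ring

theorem aeval_repB (hq : q.Monic) (hqd : q.natDegree = 2) : aeval (repB q) q = 0 := by
  rw [hq.eq_X_sq_add_C_mul_X_add_C hqd]
  ext i j : 1
  fin_cases i <;> fin_cases j <;>
    simp [repB, sq, Matrix.mul_apply, Matrix.algebraMap_matrix_apply, algebraMap_eq] <;> ring

theorem hamOmega_repA_repB : hamOmega p q (repA p) (repB q) =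
    algebraMap F[X] _ (X ^ 2 + C (q.coeff 1 - p.coeff 1) * X + C (p.coeff 0 + q.coeff 0)) := by
  ext i j : 1
  fin_cases i <;> fin_cases j <;>
    simp [hamOmega, repA, repB, Matrix.algebraMap_matrix_apply, smul_eq_C_mul] <;> ring

theorem det_commutator_repA_repB_ne_zero :
    (repA p * repB q - repB q * repA p).det ≠ 0 := by
  set P : F[X] := X ^ 2 + C (q.coeff 1) * X + C (q.coeff 0 - p.coeff 0) with hP_def
  have hdet : (repA p * repB q - repB q * repA p).det =
      -(P * P) - (2 * X + C (q.coeff 1 - p.coeff 1)) * (C (p.coeff 0) * (2 * X + C (q.coeff 1))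
          - C (p.coeff 1) * (X ^ 2 + C (q.coeff 1) * X + C (q.coeff 0))) := by
    rw [Matrix.det_fin_two, hP_def]
    simp [repA, repB]
    ring
  have hPP : (P * P).natDegree = 4 := by
    have hP : P.Monic := by rw [hP_def]; monicity!
    have hP2 : P.natDegree = 2 := by rw [hP_def]; compute_degree!
    rw [hP.natDegree_mul hP, hP2]
  refine ne_zero_of_natDegree_gt (n := 3) ?_
  rw [hdet, natDegree_sub_eq_left_of_natDegree_lt, natDegree_neg, hPP]
  · norm_num
  · rw [natDegree_neg, hPP]
    exact Nat.lt_of_le_of_lt (m := 3) (by compute_degree) (by norm_num)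

theorem eq_zero_of_mem_center (hp : p.Monic) (hpd : p.natDegree = 2) (hq : q.Monic)
    (hqd : q.natDegree = 2) {f₀ f₁ f₂ f₃ : F[X]}
    (hz : aeval (hamOmega p q (genA p q) (genB p q)) f₀
      + aeval (hamOmega p q (genA p q) (genB p q)) f₁ * genA p q
      + aeval (hamOmega p q (genA p q) (genB p q)) f₂ * genB p q
      + aeval (hamOmega p q (genA p q) (genB p q)) f₃ * (genA p q * genB p q)
      ∈ Subalgebra.center F (HamAlg p q)) :
    f₁ = 0 ∧ f₂ = 0 ∧ f₃ = 0 := by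
  obtain ⟨ρ, hρa, hρb⟩ : ∃ ρ : HamAlg p q →ₐ[F] Matrix (Fin 2) (Fin 2) F[X],
      ρ (genA p q) = repA p ∧ ρ (genB p q) = repB q :=
    ⟨lift _ _ (aeval_repA hp hpd) (aeval_repB hq hqd), lift_genA _ _ _ _, lift_genB _ _ _ _⟩
  set l : F[X] := X ^ 2 + C (q.coeff 1 - p.coeff 1) * X + C (p.coeff 0 + q.coeff 0) with hl_def
  have hl : 0 < l.natDegree := by
    have : l.natDegree = 2 := by rw [hl_def]; compute_degree!
    omega
  have hρω (f : F[X]) : ρ (aeval (hamOmega p q (genA p q) (genB p q)) f) = aeval l f • 1 := by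
    rw [← aeval_algHom_apply, AlgHom.map_hamOmega, hρa, hρb, hamOmega_repA_repB,
      aeval_algebraMap_apply, Algebra.algebraMap_eq_smul_one]
  have hcomm (x : HamAlg p q) := Commute.map (Subalgebra.mem_center_iff.1 hz x).symm ρ
  obtain ⟨h₁, h₂, h₃⟩ := Matrix.eq_zero_of_commute_of_det_commutator_ne_zero
    det_commutator_repA_repB_ne_zero
    (by simpa only [map_add, map_mul, hρω, hρa, hρb, smul_mul_assoc, one_mul]
      using hcomm (genA p q))
    (by simpa only [map_add, map_mul, hρω, hρa, hρb, smul_mul_assoc, one_mul]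
      using hcomm (genB p q))
  exact ⟨eq_zero_of_aeval_eq_zero_of_natDegree_pos hl h₁,
    eq_zero_of_aeval_eq_zero_of_natDegree_pos hl h₂,
    eq_zero_of_aeval_eq_zero_of_natDegree_pos hl h₃⟩

end HamAlg

/-- The center of `W_{p,q}` is `F[ω]` where `ω = a·b⋆ + b·a⋆`. -/
theorem statement12 (p q : F[X]) (hp : p.Monic) (hpd : p.natDegree = 2)
    (hq : q.Monic) (hqd : q.natDegree = 2)
    (σ : HamAlg p q → HamAlg p q) (hσ : IsAdjunction p q σ) :
    Subalgebra.center F (HamAlg p q) =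
      Algebra.adjoin F {genA p q * σ (genB p q) + genB p q * σ (genA p q)} := by
  obtain ⟨-, -, -, -, -, hσa, hσb⟩ := hσ
  have hω : genA p q * σ (genB p q) + genB p q * σ (genA p q) =
      hamOmega p q (genA p q) (genB p q) := by
    rw [hσa, hσb, hamOmega]
    simp only [mul_sub, ← Algebra.commutes, ← Algebra.smul_def]
    abel
  rw [hω]
  refine le_antisymm (fun z hz => ?_) (Algebra.adjoin_le (Set.singleton_subset_iff.2
    (hamOmega_mem_center hp hpd hq hqd HamAlg.aeval_genA HamAlg.aeval_genB
      HamAlg.adjoin_genA_genB)))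
  obtain ⟨f₀, f₁, f₂, f₃, rfl⟩ := exists_eq_aeval_hamOmega hp hpd hq hqd HamAlg.aeval_genA
    HamAlg.aeval_genB HamAlg.adjoin_genA_genB z
  obtain ⟨rfl, rfl, rfl⟩ := HamAlg.eq_zero_of_mem_center hp hpd hq hqd hz
  simp
end
end

section
/- Let x ∈ F[a] ∖ F·1 and y ∈ F[b] ∖ F·1, with minimal polynomials r and s over F (both monic of degree 2). Then the determinant of the 4×4 Gram matrix (⟨uᵢ,uⱼ⟩)₁≤i,j≤4, where (u₁,u₂,u₃,u₄) = (1, x, y, x·y), computed in the commutative ring F[ω], equals Λ_{r,s}(⟨x,y⟩)², where Λ_{r,s}(t) := t² − tr(r)·tr(s)·t − 4·N(r)·N(s) + tr(r)²·N(s) + tr(s)²·N(r) and Λ_{r,s}(⟨x,y⟩) denotes the evaluation of this polynomial at the central element ⟨x,y⟩. -/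
/-!
In `F[a] = F·1 + F·a` every element `z = c + d·a` satisfies `z⋆ = τ − z` and `z² = τ·z − ν` with
`τ = 2c + d·tr(p)`. If `x ∉ F`, comparing with `r(x) = 0` forces `τ = tr(r)`, hence
`x⋆ = tr(r) − x` and `x·x⋆ = N(r)`; likewise `y⋆ = tr(s) − y` and `y·y⋆ = N(s)`. These identities
express every entry of the Gram matrix of `(1, x, y, xy)` through `tr(r), tr(s), N(r), N(s)` and
`w = ⟨x, y⟩`, and the determinant of the resulting explicit matrix is `Λ_{r,s}(w)²`.
The element `w` commutes with `x` and `y` because `x·(tr(r) − x)` and `y·(tr(s) − y)` are scalars,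
and `x`, `y` generate `W_{p,q}` because `a ∈ F[x]` and `b ∈ F[y]`; so `w` is central.
-/

open Polynomial

noncomputable section

variable {F : Type*} [Field F]

section QuadraticElement

variable {R A : Type*} [CommRing R] [Ring A] [Algebra R A]

theorem mul_self_eq_of_aeval_eq_zero_s15 {r : R[X]} (hr : r.Monic) (hrd : r.natDegree = 2) {z : A}
    (h : aeval z r = 0) : z * z = (-r.coeff 1) • z - r.coeff 0 • (1 : A) := by
  rw [aeval_eq_sum_range, hrd, Finset.sum_range_succ, Finset.sum_range_succ,
    Finset.sum_range_one, pow_zero, pow_one, ← hrd, hr.coeff_natDegree, one_smul, hrd] at h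
  rw [← sq, eq_neg_of_add_eq_zero_right h]
  module

theorem exists_eq_smul_one_add_smul_of_mem_adjoin {p : R[X]} (hp : p.Monic)
    (hpd : p.natDegree = 2) {g x : A} (hg : aeval g p = 0) (hx : x ∈ Algebra.adjoin R {g}) :
    ∃ c d : R, x = c • 1 + d • g := by
  rw [Algebra.adjoin_singleton_eq_range_aeval] at hx
  obtain ⟨P, rfl⟩ := hx
  have hdeg : (P %ₘ p).natDegree ≤ 1 := by
    have := natDegree_modByMonic_lt P hp (by rintro rfl; simp at hpd)
    omega
  obtain ⟨d, c, hP⟩ := exists_eq_X_add_C_of_natDegree_le_one hdeg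
  refine ⟨c, d, ?_⟩
  rw [AlgHom.toRingHom_eq_coe, RingHom.coe_coe, ← aeval_modByMonic_eq_self_of_root hg, hP]
  simp [Algebra.algebraMap_eq_smul_one, add_comm]

theorem smul_one_add_smul_mul_self {g : A} {α β : R} (hg : g * g = α • g - β • (1 : A))
    (c d : R) :
    (c • 1 + d • g) * (c • 1 + d • g) =
      (2 * c + d * α) • (c • 1 + d • g) - (c ^ 2 + c * d * α + d ^ 2 * β) • (1 : A) := by
  have expand : (c • 1 + d • g) * (c • 1 + d • g) =
      (c * c) • (1 : A) + (2 * c * d) • g + (d * d) • (g * g) := by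
    simp only [add_mul, mul_add, smul_mul_smul, one_mul, mul_one]
    module
  rw [expand, hg]
  module

theorem mul_algebraMap_sub_self {x : A} {t n : R} (hx : x * x = t • x - n • (1 : A)) :
    x * (algebraMap R A t - x) = algebraMap R A n := by
  rw [mul_sub, hx, ← Algebra.commutes, ← Algebra.smul_def, Algebra.algebraMap_eq_smul_one]
  abel

end QuadraticElement

section NonScalarElement

variable {A : Type*} [Ring A] [Algebra F A] {x : A}

theorem eq_of_smul_sub_smul_one_eq (hx : x ∉ Set.range (algebraMap F A)) {t n t' n' : F}
    (h : t • x - n • (1 : A) = t' • x - n' • 1) : t = t' := by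
  by_contra hne
  have hsub : t - t' ≠ 0 := sub_ne_zero.mpr hne
  refine hx ⟨(t - t')⁻¹ * (n - n'), ?_⟩
  have key : (t - t') • x = (n - n') • (1 : A) := by
    rw [sub_smul, sub_smul, sub_eq_sub_iff_sub_eq_sub, h]
  rw [Algebra.algebraMap_eq_smul_one, mul_smul, ← key, smul_smul, inv_mul_cancel₀ hsub, one_smul]

theorem mem_adjoin_singleton_of_mem_adjoin_singleton {p : F[X]} (hp : p.Monic)
    (hpd : p.natDegree = 2) {g : A} (hg : aeval g p = 0) (hxg : x ∈ Algebra.adjoin F {g})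
    (hx : x ∉ Set.range (algebraMap F A)) : g ∈ Algebra.adjoin F {x} := by
  obtain ⟨c, d, hxg⟩ := exists_eq_smul_one_add_smul_of_mem_adjoin hp hpd hg hxg
  have hd : d ≠ 0 := by
    rintro rfl
    exact hx ⟨c, by simp [hxg, Algebra.algebraMap_eq_smul_one]⟩
  have hg : g = d⁻¹ • (x - c • 1) := by
    rw [hxg, add_sub_cancel_left, smul_smul, inv_mul_cancel₀ hd, one_smul]
  rw [hg]
  exact Subalgebra.smul_mem _ (Subalgebra.sub_mem _ (Algebra.self_mem_adjoin_singleton F x)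
    (Subalgebra.smul_mem _ (Subalgebra.one_mem _) c)) _

theorem apply_eq_algebraMap_sub_of_mem_adjoin_singleton {p : F[X]} (hp : p.Monic)
    (hpd : p.natDegree = 2) {g : A} (hg : aeval g p = 0) (hxg : x ∈ Algebra.adjoin F {g})
    (hx : x ∉ Set.range (algebraMap F A)) (σ : A →ₗ[F] A) (hσ1 : σ 1 = 1)
    (hσg : σ g = algebraMap F A (-p.coeff 1) - g) {r : F[X]} (hr : r.Monic)
    (hrd : r.natDegree = 2) (hrx : aeval x r = 0) :
    σ x = algebraMap F A (-r.coeff 1) - x := by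
  obtain ⟨c, d, rfl⟩ := exists_eq_smul_one_add_smul_of_mem_adjoin hp hpd hg hxg
  have htr : 2 * c + d * -p.coeff 1 = -r.coeff 1 :=
    eq_of_smul_sub_smul_one_eq hx <|
      (smul_one_add_smul_mul_self (mul_self_eq_of_aeval_eq_zero_s15 hp hpd hg) c d).symm.trans
        (mul_self_eq_of_aeval_eq_zero_s15 hr hrd hrx)
  rw [← htr, map_add, map_smul, map_smul, hσ1, hσg, Algebra.algebraMap_eq_smul_one,
    Algebra.algebraMap_eq_smul_one]
  module

end NonScalarElement

section GramMatrix

variable {R : Type*}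

def gramMatrixOfTraceNorm [Ring R] (t u n m w : R) : Matrix (Fin 4) (Fin 4) R :=
  !![2, t, u, u * t - w;
     t, 2 * n, w, u * n;
     u, w, 2 * m, m * t;
     u * t - w, u * n, m * t, 2 * (m * n)]

theorem det_gramMatrixOfTraceNorm [CommRing R] (t u n m w : R) :
    (gramMatrixOfTraceNorm t u n m w).det =
      (w ^ 2 - t * u * w + (t ^ 2 * m + u ^ 2 * n - 4 * n * m)) ^ 2 := by
  rw [Matrix.det_succ_row_zero, Fin.sum_univ_four]
  simp only [Nat.succ_eq_add_one, Nat.reduceAdd, Fin.isValue, Fin.coe_ofNat_eq_mod, Nat.zero_mod,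
    pow_zero, gramMatrixOfTraceNorm, Matrix.of_apply, Matrix.cons_val', Matrix.cons_val_zero,
    Matrix.cons_val_fin_one, one_mul, Fin.succAbove_zero, Matrix.det_fin_three,
    Matrix.submatrix_apply, Fin.succ_zero_eq_one, Matrix.cons_val_one, Fin.succ_one_eq_two,
    Matrix.cons_val, Fin.reduceSucc, Nat.one_mod, pow_one, neg_mul, Fin.succAbove,
    Fin.castSucc_zero, zero_lt_one, ↓reduceIte, Fin.castSucc_one, lt_self_iff_false,
    Fin.reduceCastSucc, Fin.lt_one_iff, Fin.reduceEq, Nat.reduceMod, even_two, Even.neg_pow, one_pow,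
    Fin.reduceLT, Nat.mod_succ]
  ring

theorem map_gramMatrixOfTraceNorm [Ring R] {S : Type*} [Ring S] (f : R →+* S) (t u n m w : R) :
    (gramMatrixOfTraceNorm t u n m w).map f =
      gramMatrixOfTraceNorm (f t) (f u) (f n) (f m) (f w) := by
  ext i j
  fin_cases i <;> fin_cases j <;> simp [gramMatrixOfTraceNorm, map_ofNat]

variable [Ring R] {σ : R → R} {x y t u n m : R}

theorem commute_mul_add_mul_of_apply_eq_sub (ht : ∀ z, Commute t z) (hu : ∀ z, Commute u z)
    (hσx : σ x = t - x) (hσy : σ y = u - y) (hxn : ∀ z, Commute (x * σ x) z) :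
    Commute x (x * σ y + y * σ x) := by
  rw [hσx] at hxn
  rw [hσx, hσy]
  have h : x * (x * (u - y) + y * (t - x)) - (x * (u - y) + y * (t - x)) * x =
      (x * (t - x) * y - y * (x * (t - x))) + x * (x * u - u * x) + x * (y * t - t * y) +
        y * (x * t - t * x) := by
    noncomm_ring
  rw [commute_iff_eq, ← sub_eq_zero, h, (hxn y).eq, (hu x).eq, (ht y).eq, (ht x).eq]
  simp

theorem adjoint_pairing_eq_gramMatrixOfTraceNorm (hσ1 : σ 1 = 1)
    (hσmul : ∀ a b, σ (a * b) = σ b * σ a) (hu : ∀ z, Commute u z) (hm : ∀ z, Commute m z)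
    (hσx : σ x = t - x) (hσy : σ y = u - y) (hxn : x * σ x = n) (hym : y * σ y = m)
    (i j : Fin 4) :
    ![1, x, y, x * y] i * σ (![1, x, y, x * y] j) + ![1, x, y, x * y] j * σ (![1, x, y, x * y] i) =
      gramMatrixOfTraceNorm t u n m (x * σ y + y * σ x) i j := by
  have hxt : x + σ x = t := by rw [hσx, add_sub_cancel]
  have hyu : y + σ y = u := by rw [hσy, add_sub_cancel]
  have e03 : σ y * σ x + x * y = u * t - (x * σ y + y * σ x) := by
    refine eq_sub_of_add_eq ?_
    calc σ y * σ x + x * y + (x * σ y + y * σ x)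
        = (y + σ y) * (x + σ x) + (x * (y + σ y) - (y + σ y) * x) := by noncomm_ring
      _ = u * t := by rw [hyu, hxt, (hu x).eq, sub_self, add_zero]
  have e11 : x * σ x + x * σ x = 2 * n := by rw [hxn, two_mul]
  have e13 : x * (σ y * σ x) + x * y * σ x = u * n := by
    calc x * (σ y * σ x) + x * y * σ x = x * (y + σ y) * σ x := by noncomm_ring
      _ = u * n := by rw [hyu, ← (hu x).eq, mul_assoc, hxn]
  have e22 : y * σ y + y * σ y = 2 * m := by rw [hym, two_mul]
  have e23 : y * (σ y * σ x) + x * y * σ y = m * t := by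
    rw [← mul_assoc, hym, mul_assoc, hym, ← (hm x).eq, ← mul_add, add_comm, hxt]
  have e33 : x * y * (σ y * σ x) + x * y * (σ y * σ x) = 2 * (m * n) := by
    rw [mul_assoc, ← mul_assoc y, hym, ← mul_assoc, ← (hm x).eq, mul_assoc, hxn, two_mul]
  fin_cases i <;> fin_cases j <;>
    simp only [Nat.succ_eq_add_one, Nat.reduceAdd, Fin.zero_eta, Fin.isValue, Fin.mk_one,
      Fin.reduceFinMk, Matrix.cons_val_zero, Matrix.cons_val_one, Matrix.cons_val, Matrix.cons_val',
      Matrix.cons_val_fin_one, Matrix.of_apply, one_mul, mul_one, hσ1, hσmul,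
      gramMatrixOfTraceNorm] <;>
    first
      | exact one_add_one_eq_two
      | exact add_comm _ _
      | assumption
      | (rw [add_comm]; assumption)

end GramMatrix

theorem Subalgebra.mem_center_of_adjoin_eq_top {R A : Type*} [CommSemiring R] [Semiring A]
    [Algebra R A] {s : Set A} (hs : Algebra.adjoin R s = ⊤) {w : A} (hw : ∀ z ∈ s, Commute z w) :
    w ∈ Subalgebra.center R A := by
  rw [Subalgebra.mem_center_iff]
  intro z
  have hz : z ∈ Subalgebra.centralizer R (Subalgebra.centralizer R s) :=
    Algebra.adjoin_le_centralizer_centralizer R s (hs ▸ Algebra.mem_top)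
  exact ((Subalgebra.mem_centralizer_iff R).mp hz w
    ((Subalgebra.mem_centralizer_iff R).mpr hw)).symm

theorem exists_gramMatrix_det_eq_sq {A : Type*} [Ring A] [Algebra F A] {σ : A → A}
    (hσ1 : σ 1 = 1) (hσmul : ∀ a b, σ (a * b) = σ b * σ a) {x y : A}
    (hxy : Algebra.adjoin F {x, y} = ⊤) {t u n m : F} (hσx : σ x = algebraMap F A t - x)
    (hσy : σ y = algebraMap F A u - y) (hxn : x * σ x = algebraMap F A n)
    (hym : y * σ y = algebraMap F A m) :
    ∃ M : Matrix (Fin 4) (Fin 4) (Subalgebra.center F A),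
      (∀ i j : Fin 4, (M i j : A) =
        ![1, x, y, x * y] i * σ (![1, x, y, x * y] j) +
          ![1, x, y, x * y] j * σ (![1, x, y, x * y] i)) ∧
      (M.det : A) = ((x * σ y + y * σ x) ^ 2 - algebraMap F A (t * u) * (x * σ y + y * σ x) +
        algebraMap F A (t ^ 2 * m + u ^ 2 * n - 4 * n * m)) ^ 2 := by
  have hcentral (c : F) : ∀ z, Commute (algebraMap F A c) z := Algebra.commute_algebraMap_left c
  have hwx : Commute x (x * σ y + y * σ x) :=
    commute_mul_add_mul_of_apply_eq_sub (hcentral _) (hcentral _) hσx hσy (hxn ▸ hcentral _)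
  have hwy : Commute y (x * σ y + y * σ x) := by
    rw [add_comm]
    exact commute_mul_add_mul_of_apply_eq_sub (hcentral _) (hcentral _) hσy hσx
      (hym ▸ hcentral _)
  have hw : x * σ y + y * σ x ∈ Subalgebra.center F A := by
    refine Subalgebra.mem_center_of_adjoin_eq_top hxy ?_
    rintro z (rfl | rfl) <;> assumption
  set Z := Subalgebra.center F A
  set W : Z := ⟨x * σ y + y * σ x, hw⟩
  set M := gramMatrixOfTraceNorm (algebraMap F Z t) (algebraMap F Z u) (algebraMap F Z n)
    (algebraMap F Z m) W
  have hdet : M.det = (W ^ 2 - algebraMap F Z (t * u) * W +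
      algebraMap F Z (t ^ 2 * m + u ^ 2 * n - 4 * n * m)) ^ 2 :=
    -- `rfl`: the two sides differ only in which ring structure on the center is unfolded
    (det_gramMatrixOfTraceNorm _ _ _ _ _).trans <| by
      simp only [map_mul, map_sub, map_add, map_pow, map_ofNat]
      rfl
  refine ⟨M, fun i j => ?_, congrArg Subtype.val hdet⟩
  rw [adjoint_pairing_eq_gramMatrixOfTraceNorm hσ1 hσmul (hcentral _) (hcentral _) hσx hσy hxn
    hym]
  exact congrFun₂ (map_gramMatrixOfTraceNorm (R := Z) Z.val.toRingHom _ _ _ _ _) i j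

section HamiltonAlgebra

variable (p q : F[X])

theorem aeval_genA : aeval (genA p q) p = 0 := by
  have hrel : hamRel p q (aeval (FreeAlgebra.ι F 0) p) 0 := Or.inl ⟨rfl, rfl⟩
  rw [genA, aeval_algHom_apply, RingQuot.mkAlgHom_rel F hrel, map_zero]

theorem aeval_genB : aeval (genB p q) q = 0 := by
  have hrel : hamRel p q (aeval (FreeAlgebra.ι F 1) q) 0 := Or.inr ⟨rfl, rfl⟩
  rw [genB, aeval_algHom_apply, RingQuot.mkAlgHom_rel F hrel, map_zero]

theorem adjoin_genA_genB : Algebra.adjoin F {genA p q, genB p q} = ⊤ := by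
  have hrange : ({genA p q, genB p q} : Set (HamAlg p q)) =
      RingQuot.mkAlgHom F (hamRel p q) '' Set.range (FreeAlgebra.ι F) := by
    rw [← Set.range_comp]
    ext
    simp [genA, genB, Fin.exists_fin_two, eq_comm]
  rw [hrange, Algebra.adjoin_image, FreeAlgebra.adjoin_range_ι, Algebra.map_top,
    AlgHom.range_eq_top]
  exact RingQuot.mkAlgHom_surjective F _

variable {p q}

theorem adjoin_eq_top_of_mem_adjoin_genA_genB (hp : p.Monic) (hpd : p.natDegree = 2)
    (hq : q.Monic) (hqd : q.natDegree = 2) {x y : HamAlg p q}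
    (hxA : x ∈ Algebra.adjoin F {genA p q}) (hx : x ∉ Set.range (algebraMap F (HamAlg p q)))
    (hyB : y ∈ Algebra.adjoin F {genB p q}) (hy : y ∉ Set.range (algebraMap F (HamAlg p q))) :
    Algebra.adjoin F {x, y} = ⊤ := by
  refine top_unique (adjoin_genA_genB p q ▸ Algebra.adjoin_le ?_)
  refine Set.insert_subset_iff.mpr ⟨?_, Set.singleton_subset_iff.mpr ?_⟩
  · exact Algebra.adjoin_mono (by simp)
      (mem_adjoin_singleton_of_mem_adjoin_singleton hp hpd (aeval_genA p q) hxA hx)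
  · exact Algebra.adjoin_mono (by simp)
      (mem_adjoin_singleton_of_mem_adjoin_singleton hq hqd (aeval_genB p q) hyB hy)

variable {σ : HamAlg p q → HamAlg p q}

def IsAdjunction.toLinearMap (hσ : IsAdjunction p q σ) : HamAlg p q →ₗ[F] HamAlg p q where
  toFun := σ
  map_add' := hσ.1
  map_smul' := hσ.2.1

end HamiltonAlgebra

/-- The Gram determinant of the inner product `⟨u,v⟩ = u·v⋆ + v·u⋆` on the deployed basis
`(1, x, y, xy)`, computed in the commutative ring `F[ω]` (the center), equals
`Λ_{r,s}(⟨x,y⟩)²`, where `r`, `s` are the minimal polynomials of `x ∈ F[a] ∖ F` and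
`y ∈ F[b] ∖ F`, and `Λ_{r,s}(t) = t² − tr(r)tr(s)·t − 4N(r)N(s) + tr(r)²N(s) + tr(s)²N(r)`. -/
theorem statement15 (p q : F[X]) (hp : p.Monic) (hpd : p.natDegree = 2)
    (hq : q.Monic) (hqd : q.natDegree = 2)
    (σ : HamAlg p q → HamAlg p q) (hσ : IsAdjunction p q σ)
    (x y : HamAlg p q)
    (hxA : x ∈ Algebra.adjoin F {genA p q}) (hx : x ∉ Set.range (algebraMap F (HamAlg p q)))
    (hyB : y ∈ Algebra.adjoin F {genB p q}) (hy : y ∉ Set.range (algebraMap F (HamAlg p q)))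
    (r s : F[X]) (hr : r.Monic) (hrd : r.natDegree = 2) (hrx : Polynomial.aeval x r = 0)
    (hs : s.Monic) (hsd : s.natDegree = 2) (hsy : Polynomial.aeval y s = 0) :
    ∃ M : Matrix (Fin 4) (Fin 4) ↥(Subalgebra.center F (HamAlg p q)),
      (∀ i j : Fin 4,
        (M i j : HamAlg p q) =
          (![1, x, y, x * y] i) * σ (![1, x, y, x * y] j) +
            (![1, x, y, x * y] j) * σ (![1, x, y, x * y] i)) ∧
      ((M.det : ↥(Subalgebra.center F (HamAlg p q))) : HamAlg p q) =
        ((x * σ y + y * σ x) ^ 2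
          - algebraMap F (HamAlg p q) ((-(r.coeff 1)) * (-(s.coeff 1))) * (x * σ y + y * σ x)
          + algebraMap F (HamAlg p q)
              ((-(r.coeff 1)) ^ 2 * s.coeff 0 + (-(s.coeff 1)) ^ 2 * r.coeff 0
                - 4 * r.coeff 0 * s.coeff 0)) ^ 2 := by
  have ⟨_, _, hσmul, hσ1, _, hσa, hσb⟩ := hσ
  have hσx : σ x = algebraMap F _ (-r.coeff 1) - x :=
    apply_eq_algebraMap_sub_of_mem_adjoin_singleton hp hpd (aeval_genA p q) hxA hx
      hσ.toLinearMap hσ1 hσa hr hrd hrx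
  have hσy : σ y = algebraMap F _ (-s.coeff 1) - y :=
    apply_eq_algebraMap_sub_of_mem_adjoin_singleton hq hqd (aeval_genB p q) hyB hy
      hσ.toLinearMap hσ1 hσb hs hsd hsy
  have hxn : x * σ x = algebraMap F _ (r.coeff 0) :=
    hσx ▸ mul_algebraMap_sub_self (mul_self_eq_of_aeval_eq_zero_s15 hr hrd hrx)
  have hym : y * σ y = algebraMap F _ (s.coeff 0) :=
    hσy ▸ mul_algebraMap_sub_self (mul_self_eq_of_aeval_eq_zero_s15 hs hsd hsy)
  exact exists_gramMatrix_det_eq_sq hσ1 hσmul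
    (adjoin_eq_top_of_mem_adjoin_genA_genB hp hpd hq hqd hxA hx hyB hy) hσx hσy hxn hym
end
end

section
/- Let L be a field and A a 4-dimensional unital associative L-algebra equipped with an L-linear involution x ↦ x̄ (an antiautomorphism of A with x̄̄ = x) such that x·x̄ ∈ L·1 for every x ∈ A. Identifying x·ȳ + y·x̄ with an element ⟨x,y⟩ of L, assume the symmetric bilinear form ⟨−,−⟩ on A is nondegenerate. Then there exist a 2-dimensional L-vector space V and a quadratic form Q on V whose polar bilinear form is nondegenerate, together with an isomorphism of L-algebras from the Clifford algebra of Q onto A; moreover, under this isomorphism the involution x ↦ x̄ corresponds to the Clifford conjugation (the composite of the grade involution and the reversal anti-automorphism) of the Clifford algebra. -/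
/-!
The pairing makes `t x = x + x̄` a linear form with `x̄ = t x - x`, so trace-zero elements are
negated by the involution and anticommute up to scalars. A trace-zero `v` has `v² ∈ L`: in
characteristic `≠ 2` because `⟨v, v⟩ = -2v²`; in characteristic `2` because `w = v²` is central,
so `t(y) w + t(w) y ∈ L` for all `y`, which forces `t w = 0` and `w ⊥ ker t`, and by
nondegeneracy only scalars are orthogonal to `ker t`. Hence the radical of `⟨-, -⟩` on the
3-dimensional space `ker t` is at most `L`, and `ker t` contains `v₁, v₂` with nonsingular Gram
matrix. With `qᵢ = vᵢ²` and `p = ⟨v₁, v₂⟩`, the binary form `Q = q₁x₀² - p x₀x₁ + q₂x₁²` has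
discriminant `p² - 4q₁q₂ ≠ 0`, and `eᵢ ↦ vᵢ` extends to `Cl(Q) → A`. The Gram matrix of
`1, v₁, v₂, v₁v₂` has determinant `disc(Q)²`, so these form a basis of `A`; since `Cl(Q)` is
spanned by `1, e₀, e₁, e₀e₁`, the map is an isomorphism. Clifford conjugation and the involution
are antiautomorphisms negating the generators, so they correspond.
-/

open LinearMap (BilinForm)
open CliffordAlgebra

namespace LinearMap.BilinForm

variable {K V : Type*} [Field K] [AddCommGroup V] [Module K V]

theorem exists_mul_sub_mul_ne_zero (β : BilinForm K V) (hβ : β.IsSymm)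
    (h : ∀ x, ∃ z, β x z = 0 ∧ β z ≠ 0) :
    ∃ v₁ v₂, β v₁ v₁ * β v₂ v₂ - β v₁ v₂ * β v₁ v₂ ≠ 0 := by
  by_cases hiso : ∃ x, β x x ≠ 0
  · obtain ⟨x, hxx⟩ := hiso
    obtain ⟨z, hxz, hz⟩ := h x
    obtain ⟨y, hzy⟩ := DFunLike.ne_iff.mp hz
    set y' := y - (β x y / β x x) • x
    have hxy' : β x y' = 0 := by simp [y', field]
    have hzy' : β z y' = β z y := by simp [y', hβ.eq z x, hxz]
    by_contra! H
    have hzz : β z z = 0 := by simpa [hxz, hxx] using H x z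
    have hy'y' : β y' y' = 0 := by simpa [hxy', hxx] using H x y'
    have := H z y'
    simp only [hzz, hy'y', hzy', zero_mul, zero_sub, neg_eq_zero, mul_self_eq_zero] at this
    exact hzy this
  · push Not at hiso
    obtain ⟨z, -, hz⟩ := h 0
    obtain ⟨y, hzy⟩ := DFunLike.ne_iff.mp hz
    exact ⟨z, y, by simpa [hiso] using hzy⟩

theorem linearIndependent_of_det_ne_zero {ι : Type*} [Fintype ι] [DecidableEq ι]
    (β : BilinForm K V) (w : ι → V) (h : (Matrix.of fun i j => β (w i) (w j)).det ≠ 0) :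
    LinearIndependent K w := by
  rw [Fintype.linearIndependent_iff]
  intro c hc
  refine congrFun (Matrix.eq_zero_of_vecMul_eq_zero h (funext fun j => ?_))
  have := congrArg (fun v => β v (w j)) hc
  simpa [Matrix.vecMul, dotProduct, map_sum] using this

end LinearMap.BilinForm

theorem Module.Dual.exists_apply_eq_zero_and_notMem {K V : Type*} [Field K] [AddCommGroup V]
    [Module K V] [FiniteDimensional K V] (f g : Module.Dual K V) (U : Submodule K V)
    (hU : Module.finrank K U + 2 < Module.finrank K V) :
    ∃ z, f z = 0 ∧ g z = 0 ∧ z ∉ U := by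
  by_contra! H
  have hle : LinearMap.ker (f.prod g) ≤ U := fun z hz => by
    simp only [LinearMap.ker_prod, Submodule.mem_inf, LinearMap.mem_ker] at hz
    exact H z hz.1 hz.2
  have hrank := LinearMap.finrank_range_add_finrank_ker (f.prod g)
  have hrange : Module.finrank K (LinearMap.range (f.prod g)) ≤ 2 := by
    simpa using Submodule.finrank_le (LinearMap.range (f.prod g))
  have := Submodule.finrank_mono hle
  omega

section BinaryForm

variable {R : Type*} [CommRing R]

def binaryForm (a b c : R) : QuadraticForm R (Fin 2 → R) :=
  a • QuadraticMap.proj 0 0 + b • QuadraticMap.proj 0 1 + c • QuadraticMap.proj 1 1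

theorem binaryForm_apply (a b c : R) (x : Fin 2 → R) :
    binaryForm a b c x = a * (x 0 * x 0) + b * (x 0 * x 1) + c * (x 1 * x 1) := by
  simp [binaryForm, QuadraticMap.proj_apply]

theorem polar_binaryForm (a b c : R) (x y : Fin 2 → R) :
    QuadraticMap.polar (binaryForm a b c) x y =
      2 * a * x 0 * y 0 + b * (x 0 * y 1 + x 1 * y 0) + 2 * c * x 1 * y 1 := by
  simp only [QuadraticMap.polar, binaryForm_apply, Pi.add_apply]
  ring

theorem polarBilin_binaryForm_separatingLeft {K : Type*} [Field K] {a b c : K}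
    (h : discrim a b c ≠ 0) : (QuadraticMap.polarBilin (binaryForm a b c)).SeparatingLeft := by
  intro x hx
  have e₀ := hx (Pi.single 0 1)
  have e₁ := hx (Pi.single 1 1)
  simp [polar_binaryForm] at e₀ e₁
  have h₀ : discrim a b c * x 0 = 0 := by
    rw [discrim]; linear_combination (-2 * c) * e₀ + b * e₁
  have h₁ : discrim a b c * x 1 = 0 := by
    rw [discrim]; linear_combination b * e₀ - (2 * a) * e₁
  ext i
  fin_cases i
  · exact (mul_eq_zero.mp h₀).resolve_left h
  · exact (mul_eq_zero.mp h₁).resolve_left h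

end BinaryForm

theorem Fintype.linearCombination_fin_two_mul_self {R A : Type*} [CommRing R] [Ring A]
    [Algebra R A] {v₁ v₂ : A} {a b c : R} (ha : algebraMap R A a = v₁ * v₁)
    (hb : algebraMap R A b = v₁ * v₂ + v₂ * v₁) (hc : algebraMap R A c = v₂ * v₂) (x : Fin 2 → R) :
    Fintype.linearCombination R ![v₁, v₂] x * Fintype.linearCombination R ![v₁, v₂] x =
      algebraMap R A (binaryForm a b c x) := by
  rw [binaryForm_apply]
  calc _ = (x 0 * x 0) • (v₁ * v₁) + (x 0 * x 1) • (v₁ * v₂ + v₂ * v₁) +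
        (x 1 * x 1) • (v₂ * v₂) := by
        simp only [Fintype.linearCombination_apply, Fin.sum_univ_two, Matrix.cons_val_zero,
          Matrix.cons_val_one, add_mul, mul_add, smul_mul_smul_comm]
        rw [mul_comm (x 1) (x 0)]
        module
    _ = _ := by
      rw [← ha, ← hb, ← hc, Algebra.smul_def, Algebra.smul_def, Algebra.smul_def, ← map_mul,
        ← map_mul, ← map_mul, ← map_add, ← map_add, mul_comm (x 0 * x 0), mul_comm (x 0 * x 1),
        mul_comm (x 1 * x 1)]

theorem CliffordAlgebra.span_one_ι_ι_mul_eq_top {R : Type*} [CommRing R]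
    (Q : QuadraticForm R (Fin 2 → R)) :
    Submodule.span R (Set.range ![1, ι Q (Pi.single 0 1), ι Q (Pi.single 1 1),
      ι Q (Pi.single 0 1) * ι Q (Pi.single 1 1)]) = ⊤ := by
  set i := ι Q (Pi.single 0 1)
  set j := ι Q (Pi.single 1 1)
  set S := Submodule.span R (Set.range ![1, i, j, i * j])
  have mem : ∀ k, ![1, i, j, i * j] k ∈ S := fun k => Submodule.subset_span ⟨k, rfl⟩
  have alg : ∀ r : R, algebraMap R (CliffordAlgebra Q) r ∈ S := fun r => by
    rw [Algebra.algebraMap_eq_smul_one]; exact S.smul_mem r (mem 0)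
  have hii : i * i = algebraMap R _ (Q (Pi.single 0 1)) := ι_sq_scalar Q _
  have hjj : j * j = algebraMap R _ (Q (Pi.single 1 1)) := ι_sq_scalar Q _
  have hji : j * i =
      algebraMap R _ (QuadraticMap.polar Q (Pi.single 1 1) (Pi.single 0 1)) - i * j :=
    ι_mul_ι_comm _ _
  have left_mul_mem : ∀ x ∈ S, i * x ∈ S ∧ j * x ∈ S := by
    intro x hx
    induction hx using Submodule.span_induction with
    | mem x hx =>
      obtain ⟨k, rfl⟩ := hx
      fin_cases k <;>
        simp only [Fin.zero_eta, Fin.mk_one, Fin.reduceFinMk, Fin.isValue, Matrix.cons_val,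
          Matrix.cons_val_zero, Matrix.cons_val_one]
      · simpa using ⟨mem 1, mem 2⟩
      · rw [hii, hji]; exact ⟨alg _, sub_mem (alg _) (mem 3)⟩
      · rw [hjj]; exact ⟨mem 3, alg _⟩
      · rw [← mul_assoc, hii, ← Algebra.smul_def, ← mul_assoc, hji, sub_mul, mul_assoc, hjj,
          ← Algebra.smul_def, ← Algebra.commutes, ← Algebra.smul_def]
        exact ⟨S.smul_mem _ (mem 2), sub_mem (S.smul_mem _ (mem 2)) (S.smul_mem _ (mem 1))⟩
    | zero => simp
    | add x y _ _ hx hy => simp only [mul_add]; exact ⟨add_mem hx.1 hy.1, add_mem hx.2 hy.2⟩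
    | smul r x _ hx => simp only [mul_smul_comm]; exact ⟨S.smul_mem r hx.1, S.smul_mem r hx.2⟩
  have mul_mem : ∀ z, ∀ x ∈ S, z * x ∈ S := by
    intro z
    induction z using CliffordAlgebra.induction with
    | algebraMap r => intro x hx; rw [← Algebra.smul_def]; exact S.smul_mem r hx
    | ι v =>
      intro x hx
      have hv : v = v 0 • Pi.single 0 1 + v 1 • Pi.single 1 1 := by
        ext k; fin_cases k <;> simp
      rw [hv, map_add, map_smul, map_smul, add_mul, smul_mul_assoc, smul_mul_assoc]
      exact add_mem (S.smul_mem _ (left_mul_mem x hx).1) (S.smul_mem _ (left_mul_mem x hx).2)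
    | mul a b ha hb => intro x hx; rw [mul_assoc]; exact ha _ (hb x hx)
    | add a b ha hb => intro x hx; rw [add_mul]; exact add_mem (ha x hx) (hb x hx)
  exact eq_top_iff.mpr fun z _ => by simpa using mul_mem z 1 (mem 0)

theorem CliffordAlgebra.bijective_of_linearIndependent {K A : Type*} [Field K] [Ring A]
    [Algebra K A] {Q : QuadraticForm K (Fin 2 → K)} (φ : CliffordAlgebra Q →ₐ[K] A)
    (hdim : Module.finrank K A = 4)
    (hli : LinearIndependent K ![1, φ (ι Q (Pi.single 0 1)), φ (ι Q (Pi.single 1 1)),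
      φ (ι Q (Pi.single 0 1)) * φ (ι Q (Pi.single 1 1))]) :
    Function.Bijective φ := by
  set W := ![1, ι Q (Pi.single 0 1), ι Q (Pi.single 1 1),
    ι Q (Pi.single 0 1) * ι Q (Pi.single 1 1)]
  have hW : φ.toLinearMap ∘ W = ![1, φ (ι Q (Pi.single 0 1)), φ (ι Q (Pi.single 1 1)),
      φ (ι Q (Pi.single 0 1)) * φ (ι Q (Pi.single 1 1))] := by
    ext k; fin_cases k <;> simp [W]
  have hspan : Submodule.span K (Set.range W) = ⊤ := CliffordAlgebra.span_one_ι_ι_mul_eq_top Q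
  have basis := Module.Basis.mk (LinearIndependent.of_comp φ.toLinearMap (hW ▸ hli)) hspan.ge
  have : FiniteDimensional K A := Module.finite_of_finrank_pos (by omega)
  have := Module.Finite.of_basis basis
  have hsurj : Function.Surjective φ.toLinearMap := by
    rw [← LinearMap.range_eq_top, ← Submodule.map_top, ← hspan, Submodule.map_span,
      ← Set.range_comp, hW]
    exact hli.span_eq_top_of_card_eq_finrank (by simp [hdim])
  refine ⟨(LinearMap.injective_iff_surjective_of_finrank_eq_finrank ?_).mpr hsurj, hsurj⟩
  rw [Module.finrank_eq_card_basis basis, hdim, Fintype.card_fin]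

/-- Only the polarization `x ȳ + y x̄ ∈ L` of the usual axiom `x x̄ ∈ L` is required; in
characteristic `2` it is a priori weaker. -/
structure StandardInvolution (L A : Type*) [Field L] [Ring A] [Algebra L A] where
  bar : A →ₗ[L] A
  bar_mul : ∀ x y, bar (x * y) = bar y * bar x
  bar_bar : ∀ x, bar (bar x) = x
  form : A → A → L
  mul_bar_add_mul_bar : ∀ x y, x * bar y + y * bar x = algebraMap L A (form x y)

namespace StandardInvolution

variable {L A : Type*} [Field L] [Ring A] [Algebra L A] (σ : StandardInvolution L A)

theorem bar_one : σ.bar 1 = 1 := by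
  simpa [σ.bar_bar] using (σ.bar_mul (σ.bar 1) 1).symm

theorem map_reverse_involute {M : Type*} [AddCommGroup M] [Module L M] {Q : QuadraticForm L M}
    (φ : CliffordAlgebra Q →ₐ[L] A) (hι : ∀ m, σ.bar (φ (ι Q m)) = -φ (ι Q m))
    (z : CliffordAlgebra Q) : φ (reverse (involute z)) = σ.bar (φ z) := by
  induction z using CliffordAlgebra.induction with
  | algebraMap r =>
    rw [AlgHom.commutes, reverse.commutes, AlgHom.commutes, Algebra.algebraMap_eq_smul_one,
      map_smul, bar_one]
  | ι m => rw [involute_ι, map_neg, reverse_ι, map_neg, hι]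
  | mul a b ha hb => rw [map_mul, reverse.map_mul, map_mul, map_mul, σ.bar_mul, ha, hb]
  | add a b ha hb => simp only [map_add, ha, hb]

variable [Nontrivial A]

def bilin : LinearMap.BilinForm L A :=
  LinearMap.mk₂ L σ.form
    (fun x x' y => (algebraMap L A).injective <| by
      simp only [map_add, ← σ.mul_bar_add_mul_bar, add_mul, mul_add]; abel)
    (fun c x y => (algebraMap L A).injective <| by
      rw [smul_eq_mul, map_mul, ← σ.mul_bar_add_mul_bar, ← σ.mul_bar_add_mul_bar,
        ← Algebra.smul_def, map_smul, smul_mul_assoc, mul_smul_comm, smul_add])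
    (fun x y y' => (algebraMap L A).injective <| by
      simp only [map_add, ← σ.mul_bar_add_mul_bar, add_mul, mul_add]; abel)
    (fun c x y => (algebraMap L A).injective <| by
      rw [smul_eq_mul, map_mul, ← σ.mul_bar_add_mul_bar, ← σ.mul_bar_add_mul_bar,
        ← Algebra.smul_def, map_smul, smul_mul_assoc, mul_smul_comm, smul_add])

@[simp]
theorem algebraMap_bilin (x y : A) :
    algebraMap L A (σ.bilin x y) = x * σ.bar y + y * σ.bar x :=
  (σ.mul_bar_add_mul_bar x y).symm

theorem bilin_comm (x y : A) : σ.bilin x y = σ.bilin y x :=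
  (algebraMap L A).injective <| by simp only [algebraMap_bilin, add_comm]

theorem isSymm_bilin : σ.bilin.IsSymm := ⟨σ.bilin_comm⟩

def trace : A →ₗ[L] L := σ.bilin 1

theorem bilin_one_left (x : A) : σ.bilin 1 x = σ.trace x := rfl

theorem algebraMap_trace (x : A) : algebraMap L A (σ.trace x) = x + σ.bar x := by
  simp [trace, bar_one, add_comm]

theorem bilin_one_right (x : A) : σ.bilin x 1 = σ.trace x := σ.bilin_comm x 1

theorem bar_eq (x : A) : σ.bar x = algebraMap L A (σ.trace x) - x := by
  rw [algebraMap_trace]; abel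

theorem bar_eq_neg {v : A} (hv : σ.trace v = 0) : σ.bar v = -v := by
  rw [bar_eq, hv, map_zero, zero_sub]

theorem trace_one : σ.trace 1 = 2 :=
  (algebraMap L A).injective <| by
    rw [algebraMap_trace, bar_one, map_ofNat, one_add_one_eq_two]

theorem mul_add_mul_comm (x y : A) :
    x * y + y * x = σ.trace y • x + σ.trace x • y - algebraMap L A (σ.bilin x y) := by
  rw [algebraMap_bilin, σ.bar_eq x, σ.bar_eq y, Algebra.smul_def, Algebra.smul_def, mul_sub,
    mul_sub, ← Algebra.commutes, ← Algebra.commutes]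
  abel

theorem exists_trace_eq_one (hsep : σ.bilin.SeparatingLeft) : ∃ u, σ.trace u = 1 := by
  have htrace : σ.trace ≠ 0 := fun h => one_ne_zero (hsep 1 (LinearMap.congr_fun h))
  obtain ⟨w, hw⟩ := DFunLike.ne_iff.mp htrace
  exact ⟨(σ.trace w)⁻¹ • w, by rw [map_smul, smul_eq_mul, inv_mul_cancel₀ hw]⟩

theorem mem_one_of_bilin_eq_zero_of_trace_eq_zero (hsep : σ.bilin.SeparatingLeft) {z : A}
    (horth : ∀ y, σ.trace y = 0 → σ.bilin z y = 0) : z ∈ (1 : Submodule L A) := by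
  obtain ⟨u, hu⟩ := σ.exists_trace_eq_one hsep
  refine Submodule.mem_one.mpr ⟨σ.bilin z u, (sub_eq_zero.mp (hsep _ fun y => ?_)).symm⟩
  have := horth (y - σ.trace y • u) (by simp [hu])
  rw [Algebra.algebraMap_eq_smul_one]
  simp only [map_sub, map_smul, LinearMap.sub_apply, LinearMap.smul_apply, smul_eq_mul,
    bilin_one_left] at this ⊢
  linear_combination this

theorem exists_trace_eq_zero_bilin_eq_zero_notMem_one (hdim : Module.finrank L A = 4) (x : A) :
    ∃ z, σ.trace z = 0 ∧ σ.bilin x z = 0 ∧ z ∉ (1 : Submodule L A) := by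
  have : FiniteDimensional L A := Module.finite_of_finrank_pos (by omega)
  refine Module.Dual.exists_apply_eq_zero_and_notMem σ.trace (σ.bilin x) 1 ?_
  rw [Submodule.one_eq_span, finrank_span_singleton one_ne_zero, hdim]
  norm_num

theorem commute_mul_self_of_trace_eq_zero {v : A} (hv : σ.trace v = 0) (y : A) :
    Commute (v * v) y := by
  have hvy : v * y + y * v = σ.trace y • v - algebraMap L A (σ.bilin v y) := by
    rw [σ.mul_add_mul_comm, hv, zero_smul, add_zero]
  have h : v * (v * y + y * v) = (v * y + y * v) * v := by
    rw [hvy, mul_sub, sub_mul, mul_smul_comm, smul_mul_assoc, Algebra.commutes (R := L)]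
  simp only [mul_add, add_mul, mul_assoc] at h
  rw [Commute, SemiconjBy, mul_assoc]
  exact add_right_cancel (h.trans (add_comm _ _))

theorem mul_self_mem_one_of_two_ne_zero (h2 : (2 : L) ≠ 0) {v : A} (hv : σ.trace v = 0) :
    v * v ∈ (1 : Submodule L A) := by
  have h : algebraMap L A (σ.bilin v v) = (2 : L) • -(v * v) := by
    rw [algebraMap_bilin, bar_eq_neg _ hv, mul_neg, two_smul]
  refine Submodule.mem_one.mpr ⟨-(2⁻¹ * σ.bilin v v), ?_⟩
  rw [map_neg, map_mul, ← Algebra.smul_def, h, inv_smul_smul₀ h2, neg_neg]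

theorem mul_self_mem_one_of_two_eq_zero (hsep : σ.bilin.SeparatingLeft)
    (hdim : Module.finrank L A = 4) (h2 : (2 : L) = 0) {v : A} (hv : σ.trace v = 0) :
    v * v ∈ (1 : Submodule L A) := by
  set w := v * v
  have key : ∀ y, σ.trace y • w + σ.trace w • y = algebraMap L A (σ.bilin w y) := fun y => by
    have h := σ.mul_add_mul_comm w y
    rw [(σ.commute_mul_self_of_trace_eq_zero hv y).eq, ← two_smul L, h2, zero_smul] at h
    exact sub_eq_zero.mp h.symm
  have htw : σ.trace w = 0 := by
    by_contra htw
    obtain ⟨z, hz, -, hz1⟩ := σ.exists_trace_eq_zero_bilin_eq_zero_notMem_one hdim 1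
    refine hz1 (Submodule.mem_one.mpr ⟨(σ.trace w)⁻¹ * σ.bilin w z, ?_⟩)
    rw [map_mul, ← Algebra.smul_def, ← key z, hz, zero_smul, zero_add, inv_smul_smul₀ htw]
  refine σ.mem_one_of_bilin_eq_zero_of_trace_eq_zero hsep fun y hy => ?_
  have h := key y
  rw [hy, htw, zero_smul, zero_smul, add_zero, eq_comm,
    map_eq_zero_iff _ (algebraMap L A).injective] at h
  exact h

theorem mul_self_mem_one (hsep : σ.bilin.SeparatingLeft) (hdim : Module.finrank L A = 4) {v : A}
    (hv : σ.trace v = 0) : v * v ∈ (1 : Submodule L A) := by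
  by_cases h2 : (2 : L) = 0
  · exact σ.mul_self_mem_one_of_two_eq_zero hsep hdim h2 hv
  · exact σ.mul_self_mem_one_of_two_ne_zero h2 hv

theorem exists_trace_eq_zero_gram_ne_zero (hsep : σ.bilin.SeparatingLeft)
    (hdim : Module.finrank L A = 4) :
    ∃ v₁ v₂, σ.trace v₁ = 0 ∧ σ.trace v₂ = 0 ∧
      σ.bilin v₁ v₁ * σ.bilin v₂ v₂ - σ.bilin v₁ v₂ * σ.bilin v₁ v₂ ≠ 0 := by
  obtain ⟨v₁, v₂, h⟩ := (σ.bilin.restrict (LinearMap.ker σ.trace)).exists_mul_sub_mul_ne_zero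
    (σ.isSymm_bilin.restrict _) fun x => by
      obtain ⟨z, hz, hxz, hz1⟩ := σ.exists_trace_eq_zero_bilin_eq_zero_notMem_one hdim x
      refine ⟨⟨z, hz⟩, hxz, fun h0 => hz1 ?_⟩
      exact σ.mem_one_of_bilin_eq_zero_of_trace_eq_zero hsep fun y hy =>
        LinearMap.congr_fun h0 ⟨y, hy⟩
  exact ⟨v₁, v₂, v₁.2, v₂.2, h⟩

theorem bilin_self_of_trace_eq_zero {v : A} {q : L} (hv : σ.trace v = 0)
    (hq : algebraMap L A q = v * v) : σ.bilin v v = -(2 * q) :=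
  (algebraMap L A).injective <| by
    rw [algebraMap_bilin, bar_eq_neg _ hv, map_neg, map_mul, hq, map_ofNat, two_mul, mul_neg,
      neg_add]

theorem mul_add_mul_comm_of_trace_eq_zero {x y : A} (hx : σ.trace x = 0) (hy : σ.trace y = 0) :
    x * y + y * x = -algebraMap L A (σ.bilin x y) := by
  rw [σ.mul_add_mul_comm, hx, hy, zero_smul, zero_smul, zero_add, zero_sub]

theorem linearIndependent_one_mul {v₁ v₂ : A} {q₁ q₂ : L} (hv₁ : σ.trace v₁ = 0)
    (hv₂ : σ.trace v₂ = 0) (hq₁ : algebraMap L A q₁ = v₁ * v₁)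
    (hq₂ : algebraMap L A q₂ = v₂ * v₂) (hdisc : discrim q₁ (-σ.bilin v₁ v₂) q₂ ≠ 0) :
    LinearIndependent L ![1, v₁, v₂, v₁ * v₂] := by
  set p := σ.bilin v₁ v₂
  have hbar : σ.bar (v₁ * v₂) = v₂ * v₁ := by
    rw [σ.bar_mul, bar_eq_neg _ hv₁, bar_eq_neg _ hv₂, neg_mul_neg]
  have h₁ : σ.bilin v₁ (v₁ * v₂) = 0 := (algebraMap L A).injective <| by
    rw [algebraMap_bilin, hbar, bar_eq_neg _ hv₁, map_zero, mul_neg, ← mul_assoc, add_neg_cancel]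
  have h₂ : σ.bilin v₂ (v₁ * v₂) = 0 := (algebraMap L A).injective <| by
    rw [algebraMap_bilin, hbar, bar_eq_neg _ hv₂, map_zero, mul_neg, ← mul_assoc, ← hq₂,
      mul_assoc, ← hq₂, Algebra.commutes, add_neg_cancel]
  have h₁₂ : σ.bilin (v₁ * v₂) (v₁ * v₂) = 2 * q₁ * q₂ := (algebraMap L A).injective <| by
    have h : v₁ * v₂ * (v₂ * v₁) = algebraMap L A (q₁ * q₂) := by
      rw [mul_assoc, ← mul_assoc v₂, ← hq₂, ← Algebra.smul_def, mul_smul_comm, ← hq₁,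
        Algebra.smul_def, ← map_mul, mul_comm]
    rw [algebraMap_bilin, hbar, h, ← two_mul, mul_assoc, map_mul (algebraMap L A) 2, map_ofNat]
  have ht : σ.trace (v₁ * v₂) = -p := (algebraMap L A).injective <| by
    rw [algebraMap_trace, hbar, σ.mul_add_mul_comm_of_trace_eq_zero hv₁ hv₂, map_neg]
  have gram : Matrix.of (fun k l => σ.bilin (![1, v₁, v₂, v₁ * v₂] k) (![1, v₁, v₂, v₁ * v₂] l)) =
      !![2, 0, 0, -p; 0, -(2 * q₁), p, 0; 0, p, -(2 * q₂), 0; -p, 0, 0, 2 * q₁ * q₂] := by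
    ext k l
    fin_cases k <;> fin_cases l <;>
      simp [bilin_one_left, bilin_one_right, trace_one, hv₁, hv₂, ht, h₁, h₂, h₁₂,
        σ.bilin_self_of_trace_eq_zero hv₁ hq₁, σ.bilin_self_of_trace_eq_zero hv₂ hq₂, p,
        σ.bilin_comm v₂ v₁, σ.bilin_comm (v₁ * v₂) v₁, σ.bilin_comm (v₁ * v₂) v₂]
  have hdet : (!![2, 0, 0, -p; 0, -(2 * q₁), p, 0; 0, p, -(2 * q₂), 0; -p, 0, 0, 2 * q₁ * q₂] :
      Matrix (Fin 4) (Fin 4) L).det = discrim q₁ (-p) q₂ ^ 2 := by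
    simp [Matrix.det_succ_row_zero, Fin.sum_univ_succ, Fin.succAbove, discrim]
    ring
  refine σ.bilin.linearIndependent_of_det_ne_zero _ ?_
  rw [gram, hdet]
  exact pow_ne_zero 2 hdisc

theorem exists_cliffordAlgebra_algEquiv (hsep : σ.bilin.SeparatingLeft)
    (hdim : Module.finrank L A = 4) :
    ∃ Q : QuadraticForm L (Fin 2 → L), (QuadraticMap.polarBilin Q).SeparatingLeft ∧
      ∃ e : CliffordAlgebra Q ≃ₐ[L] A, ∀ z, e (reverse (involute z)) = σ.bar (e z) := by
  obtain ⟨v₁, v₂, hv₁, hv₂, hgram⟩ := σ.exists_trace_eq_zero_gram_ne_zero hsep hdim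
  obtain ⟨q₁, hq₁⟩ := Submodule.mem_one.mp (σ.mul_self_mem_one hsep hdim hv₁)
  obtain ⟨q₂, hq₂⟩ := Submodule.mem_one.mp (σ.mul_self_mem_one hsep hdim hv₂)
  have hdisc : discrim q₁ (-σ.bilin v₁ v₂) q₂ ≠ 0 := by
    rw [σ.bilin_self_of_trace_eq_zero hv₁ hq₁, σ.bilin_self_of_trace_eq_zero hv₂ hq₂] at hgram
    rw [discrim]
    contrapose! hgram
    linear_combination -hgram
  set f := Fintype.linearCombination L ![v₁, v₂]
  have hf := Fintype.linearCombination_fin_two_mul_self (b := -σ.bilin v₁ v₂) hq₁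
    (by rw [map_neg, σ.mul_add_mul_comm_of_trace_eq_zero hv₁ hv₂]) hq₂
  set φ := CliffordAlgebra.lift _ ⟨f, hf⟩
  have hφ : ∀ x, φ (ι _ x) = f x := CliffordAlgebra.lift_ι_apply _ _
  refine ⟨_, polarBilin_binaryForm_separatingLeft hdisc,
    AlgEquiv.ofBijective φ (CliffordAlgebra.bijective_of_linearIndependent φ hdim ?_),
    σ.map_reverse_involute φ fun x => σ.bar_eq_neg ?_⟩
  · simpa [hφ, f] using σ.linearIndependent_one_mul hv₁ hv₂ hq₁ hq₂ hdisc
  · simp [hφ, f, Fintype.linearCombination_apply, hv₁, hv₂]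

end StandardInvolution

/-- **Recognition theorem for quaternion algebras.** Let `A` be a 4-dimensional algebra over a
field `L`, equipped with an `L`-linear involution `x ↦ x̄` (an antiautomorphism of square the
identity) such that `x·x̄` is scalar for all `x`, and such that the associated inner product
`⟨x,y⟩ = x·ȳ + y·x̄` (valued in `L`) is nondegenerate. Then `A` is isomorphic, as an
`L`-algebra, to the Clifford algebra of a 2-dimensional quadratic form with nondegenerate
polar form, in such a way that the involution corresponds to the Clifford conjugation
(the composite of the grade involution and the reversal). -/
theorem statement16 (L : Type*) [Field L] (A : Type*) [Ring A] [Algebra L A]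
    (hdim : Module.finrank L A = 4)
    (bar : A →ₗ[L] A)
    (hmul : ∀ x y : A, bar (x * y) = bar y * bar x)
    (hinv : ∀ x : A, bar (bar x) = x)
    (B : A → A → L)
    (hB : ∀ x y : A, x * bar y + y * bar x = algebraMap L A (B x y))
    (hnd : ∀ x : A, (∀ y : A, B x y = 0) → x = 0) :
    ∃ Q : QuadraticForm L (Fin 2 → L),
      (∀ v : Fin 2 → L, (∀ w : Fin 2 → L, QuadraticMap.polar Q v w = 0) → v = 0) ∧
      ∃ e : CliffordAlgebra Q ≃ₐ[L] A,
        ∀ z : CliffordAlgebra Q,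
          e (CliffordAlgebra.reverse (CliffordAlgebra.involute z)) = bar (e z) := by
  have : Nontrivial A := Module.nontrivial_of_finrank_pos (R := L) (by omega)
  exact StandardInvolution.exists_cliffordAlgebra_algEquiv ⟨bar, hmul, hinv, B, hB⟩ hnd hdim
end
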